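/- (Corollary 1) Let u₁, u₂ ∈ ℝ³ be unit vectors and let v₁, v₂ ∈ ℝ³ be orthonormal vectors. Let O := (1/√2)((u₁·σ) ⊗ (v₁·σ) + (u₂·σ) ⊗ (v₂·σ)). Then for every unit vector ψ ∈ ℂ^(Fin 2 × Fin 2), |⟨ψ, Oψ⟩| ≤ √2; moreover, there exists a unit vector ψ with |⟨ψ, Oψ⟩| = √2 if and only if u₁ ⬝ u₂ = 0. -/

import Mathlib

open Matrix Kronecker Complex

noncomputable def σ1 : Matrix (Fin 2) (Fin 2) ℂ := !![0, 1; 1, 0]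

noncomputable def σ2 : Matrix (Fin 2) (Fin 2) ℂ := !![0, -Complex.I; Complex.I, 0]

noncomputable def σ3 : Matrix (Fin 2) (Fin 2) ℂ := !![1, 0; 0, -1]

/-- For `a ∈ ℝ³`, the observable `a·σ = a₁σ₁ + a₂σ₂ + a₃σ₃`. -/
noncomputable def pauliDot (a : Fin 3 → ℝ) : Matrix (Fin 2) (Fin 2) ℂ :=
  (a 0 : ℂ) • σ1 + (a 1 : ℂ) • σ2 + (a 2 : ℂ) • σ3

/-!
Write `O = S / √2` with `S = A₁ ⊗ B₁ + A₂ ⊗ B₂`, `Aᵢ = uᵢ·σ`, `Bᵢ = vᵢ·σ`. The Pauli product rule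
`(a·σ)(b·σ) = (a ⬝ b) + i (a × b)·σ` gives `Aᵢ² = Bᵢ² = 1` and, as `v₁ ⟂ v₂`, `B₂B₁ = -B₁B₂`;
hence `O² = 1 - T` with `T = (u₁ × u₂)·σ ⊗ (v₁ × v₂)·σ` and `T² = 1 - (u₁ ⬝ u₂)²`.
By Cauchy–Schwarz, `|⟨O⟩|² ≤ ⟨O²⟩ = 1 - ⟨T⟩ ≤ 1 + |⟨T⟩|` and `|⟨T⟩|² ≤ 1 - (u₁ ⬝ u₂)²`, which gives
the bound `√2` and shows that attaining it forces `u₁ ⬝ u₂ = 0`. Conversely, if `u₁ ⬝ u₂ = 0` then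
`T` is a traceless involution, so `Tφ = -φ` for some `φ ≠ 0`; then `O²φ = 2φ`, and one of
`φ`, `Oφ + √2 φ` is an eigenvector of `O` for the eigenvalue `±√2`.
-/

section Eigenvectors

variable {R n : Type*} [CommRing R] [Fintype n]

lemma exists_mulVec_eq_neg_of_mul_self_eq_one [DecidableEq n] {T : Matrix n n R}
    (hT : T * T = 1) (hT1 : T ≠ 1) : ∃ φ : n → R, φ ≠ 0 ∧ T *ᵥ φ = -φ := by
  obtain ⟨v, hv⟩ : ∃ v, (1 - T) *ᵥ v ≠ 0 := by
    by_contra! h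
    exact hT1 (sub_eq_zero.mp (mulVec_injective (funext fun v => by simpa using h v))).symm
  refine ⟨(1 - T) *ᵥ v, hv, ?_⟩
  rw [mulVec_mulVec, mul_sub, mul_one, hT, ← neg_sub, neg_mulVec]

lemma exists_mulVec_eq_smul_of_mulVec_mulVec_eq {M : Matrix n n R} {φ : n → R} (hφ : φ ≠ 0)
    {μ : R} (h : M *ᵥ M *ᵥ φ = (μ * μ) • φ) :
    ∃ ξ : n → R, ξ ≠ 0 ∧ ∃ ν, (ν = μ ∨ ν = -μ) ∧ M *ᵥ ξ = ν • ξ := by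
  by_cases hξ : M *ᵥ φ + μ • φ = 0
  · exact ⟨φ, hφ, -μ, .inr rfl, by rwa [neg_smul, eq_neg_iff_add_eq_zero]⟩
  · refine ⟨M *ᵥ φ + μ • φ, hξ, μ, .inl rfl, ?_⟩
    rw [mulVec_add, mulVec_smul, h, smul_add, smul_smul]
    abel

end Eigenvectors

section QuadraticForm

variable {𝕜 n : Type*} [RCLike 𝕜] [Fintype n]

lemma norm_star_dotProduct_sq_le (x y : n → 𝕜) :
    ‖star x ⬝ᵥ y‖ ^ 2 ≤ RCLike.re (star x ⬝ᵥ x) * RCLike.re (star y ⬝ᵥ y) := by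
  have h := inner_mul_inner_self_le (𝕜 := 𝕜) (WithLp.toLp 2 x) (WithLp.toLp 2 y)
  rw [norm_inner_symm (WithLp.toLp 2 y), ← sq] at h
  simpa only [EuclideanSpace.inner_toLp_toLp, dotProduct_comm _ (star _)] using h

lemma star_mulVec_dotProduct_mulVec (M N : Matrix n n 𝕜) (x : n → 𝕜) :
    star (M *ᵥ x) ⬝ᵥ N *ᵥ x = star x ⬝ᵥ (Mᴴ * N) *ᵥ x := by
  rw [star_mulVec, dotProduct_mulVec, vecMul_vecMul, ← dotProduct_mulVec]

lemma norm_star_dotProduct_mulVec_sq_le (M : Matrix n n 𝕜) {ψ : n → 𝕜} (hψ : star ψ ⬝ᵥ ψ = 1) :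
    ‖star ψ ⬝ᵥ M *ᵥ ψ‖ ^ 2 ≤ RCLike.re (star ψ ⬝ᵥ (Mᴴ * M) *ᵥ ψ) := by
  simpa [hψ, star_mulVec_dotProduct_mulVec] using norm_star_dotProduct_sq_le ψ (M *ᵥ ψ)

lemma exists_star_dotProduct_mulVec_eq_of_mulVec_eq_smul {M : Matrix n n 𝕜} {ξ : n → 𝕜}
    (hξ : ξ ≠ 0) {ν : 𝕜} (h : M *ᵥ ξ = ν • ξ) :
    ∃ ψ : n → 𝕜, star ψ ⬝ᵥ ψ = 1 ∧ star ψ ⬝ᵥ M *ᵥ ψ = ν := by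
  set x := WithLp.toLp 2 ξ
  have hx : x ≠ 0 := by simpa [x] using hξ
  set ψ := (‖x‖⁻¹ : 𝕜) • ξ
  have hψ : star ψ ⬝ᵥ ψ = 1 := by
    rw [dotProduct_comm, ← EuclideanSpace.inner_toLp_toLp, inner_self_eq_norm_sq_to_K,
      WithLp.toLp_smul, norm_smul_inv_norm hx]
    simp
  refine ⟨ψ, hψ, ?_⟩
  rw [mulVec_smul, h, smul_comm, dotProduct_smul, hψ, smul_eq_mul, mul_one]

variable [DecidableEq n]

lemma norm_star_dotProduct_mulVec_sq_le_one_add {O T : Matrix n n 𝕜} (hO : O.IsHermitian)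
    (hOT : O * O = 1 - T) {ψ : n → 𝕜} (hψ : star ψ ⬝ᵥ ψ = 1) :
    ‖star ψ ⬝ᵥ O *ᵥ ψ‖ ^ 2 ≤ 1 + ‖star ψ ⬝ᵥ T *ᵥ ψ‖ :=
  calc ‖star ψ ⬝ᵥ O *ᵥ ψ‖ ^ 2 ≤ RCLike.re (star ψ ⬝ᵥ (Oᴴ * O) *ᵥ ψ) :=
        norm_star_dotProduct_mulVec_sq_le O hψ
    _ = 1 - RCLike.re (star ψ ⬝ᵥ T *ᵥ ψ) := by
        rw [hO.eq, hOT, sub_mulVec, one_mulVec, dotProduct_sub, hψ, map_sub, RCLike.one_re]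
    _ ≤ 1 + ‖star ψ ⬝ᵥ T *ᵥ ψ‖ := by
        linarith [neg_le_of_abs_le (RCLike.abs_re_le_norm (star ψ ⬝ᵥ T *ᵥ ψ))]

lemma norm_star_dotProduct_mulVec_sq_le_of_mul_self_eq_smul {T : Matrix n n 𝕜}
    (hT : T.IsHermitian) {t : ℝ} (hTT : T * T = (t : 𝕜) • 1) {ψ : n → 𝕜}
    (hψ : star ψ ⬝ᵥ ψ = 1) : ‖star ψ ⬝ᵥ T *ᵥ ψ‖ ^ 2 ≤ t := by
  have h := norm_star_dotProduct_mulVec_sq_le T hψ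
  rwa [hT.eq, hTT, smul_mulVec, one_mulVec, dotProduct_smul, hψ, smul_eq_mul, mul_one,
    RCLike.ofReal_re] at h

lemma exists_norm_star_dotProduct_mulVec_eq_sqrt_two {O T : Matrix n n 𝕜} (hOT : O * O = 1 - T)
    (hT : T * T = 1) (hT1 : T ≠ 1) :
    ∃ ψ : n → 𝕜, star ψ ⬝ᵥ ψ = 1 ∧ ‖star ψ ⬝ᵥ O *ᵥ ψ‖ = √2 := by
  obtain ⟨φ, hφ, hTφ⟩ := exists_mulVec_eq_neg_of_mul_self_eq_one hT hT1
  have hOOφ : O *ᵥ O *ᵥ φ = ((√2 : ℝ) * (√2 : ℝ) : 𝕜) • φ := by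
    rw [mulVec_mulVec, hOT, sub_mulVec, one_mulVec, hTφ, ← RCLike.ofReal_mul,
      Real.mul_self_sqrt zero_le_two]
    simp [two_smul]
  obtain ⟨ξ, hξ, ν, hν, hOξ⟩ := exists_mulVec_eq_smul_of_mulVec_mulVec_eq hφ hOOφ
  obtain ⟨ψ, hψ, hexp⟩ := exists_star_dotProduct_mulVec_eq_of_mulVec_eq_smul hξ hOξ
  refine ⟨ψ, hψ, ?_⟩
  rcases hν with rfl | rfl <;> simp [hexp]

end QuadraticForm

section Kronecker

variable {R l m n p : Type*} [CommRing R]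

lemma Matrix.kronecker_neg (A : Matrix l m R) (B : Matrix n p R) : A ⊗ₖ (-B) = -(A ⊗ₖ B) := by
  ext; simp

lemma Matrix.sub_kronecker (A A' : Matrix l m R) (B : Matrix n p R) :
    (A - A') ⊗ₖ B = A ⊗ₖ B - A' ⊗ₖ B := by
  ext; simp [sub_mul]

lemma Matrix.IsHermitian.kronecker [StarRing R] {A : Matrix l l R} {B : Matrix n n R}
    (hA : A.IsHermitian) (hB : B.IsHermitian) : (A ⊗ₖ B).IsHermitian :=
  (conjTranspose_kronecker A B).trans (by rw [hA.eq, hB.eq])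

variable [Fintype m] [Fintype n] [DecidableEq m] [DecidableEq n]

lemma kronecker_add_kronecker_mul_self {A₁ A₂ : Matrix m m R} {B₁ B₂ : Matrix n n R}
    (hA₁ : A₁ * A₁ = 1) (hA₂ : A₂ * A₂ = 1) (hB₁ : B₁ * B₁ = 1) (hB₂ : B₂ * B₂ = 1)
    (hB : B₂ * B₁ = -(B₁ * B₂)) :
    (A₁ ⊗ₖ B₁ + A₂ ⊗ₖ B₂) * (A₁ ⊗ₖ B₁ + A₂ ⊗ₖ B₂) = 2 + (A₁ * A₂ - A₂ * A₁) ⊗ₖ (B₁ * B₂) := by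
  simp only [add_mul, mul_add, ← mul_kronecker_mul, hA₁, hA₂, hB₁, hB₂, hB, one_kronecker_one,
    kronecker_neg, sub_kronecker]
  rw [← one_add_one_eq_two]
  abel

end Kronecker

lemma pauliDot_mul_pauliDot (a b : Fin 3 → ℝ) :
    pauliDot a * pauliDot b = ((a ⬝ᵥ b : ℝ) : ℂ) • 1 + I • pauliDot (a ⨯₃ b) := by
  ext i j
  fin_cases i <;> fin_cases j <;>
    simp [pauliDot, σ1, σ2, σ3, cross_apply, dotProduct, Fin.sum_univ_three, mul_apply] <;>
    ring_nf <;> simp [I_sq] <;> ring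

lemma pauliDot_neg (a : Fin 3 → ℝ) : pauliDot (-a) = -pauliDot a := by
  simp only [pauliDot, Pi.neg_apply, ofReal_neg, neg_smul, neg_add]

lemma pauliDot_mul_self (a : Fin 3 → ℝ) : pauliDot a * pauliDot a = ((a ⬝ᵥ a : ℝ) : ℂ) • 1 := by
  rw [pauliDot_mul_pauliDot, cross_self]
  simp [pauliDot]

lemma pauliDot_anticomm_of_dotProduct_eq_zero {a b : Fin 3 → ℝ} (h : a ⬝ᵥ b = 0) :
    pauliDot b * pauliDot a = -(pauliDot a * pauliDot b) := by
  rw [pauliDot_mul_pauliDot, pauliDot_mul_pauliDot, dotProduct_comm, h, ← cross_anticomm,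
    pauliDot_neg]
  simp

lemma pauliDot_commutator (a b : Fin 3 → ℝ) :
    pauliDot a * pauliDot b - pauliDot b * pauliDot a = (2 * I) • pauliDot (a ⨯₃ b) := by
  rw [pauliDot_mul_pauliDot, pauliDot_mul_pauliDot, dotProduct_comm, ← cross_anticomm,
    pauliDot_neg]
  module

lemma isHermitian_pauliDot (a : Fin 3 → ℝ) : (pauliDot a).IsHermitian := by
  ext i j
  fin_cases i <;> fin_cases j <;> simp [pauliDot, σ1, σ2, σ3]

lemma trace_pauliDot (a : Fin 3 → ℝ) : (pauliDot a).trace = 0 := by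
  simp [pauliDot, σ1, σ2, σ3, trace]

lemma pauliDot_kronecker_pauliDot_mul_self (a b : Fin 3 → ℝ) :
    (pauliDot a ⊗ₖ pauliDot b) * (pauliDot a ⊗ₖ pauliDot b) =
      ((a ⬝ᵥ a * (b ⬝ᵥ b) : ℝ) : ℂ) • 1 := by
  rw [← mul_kronecker_mul, pauliDot_mul_self, pauliDot_mul_self, smul_kronecker, kronecker_smul,
    one_kronecker_one, smul_smul, ofReal_mul, mul_comm]

lemma pauliDot_kronecker_pauliDot_ne_one (a b : Fin 3 → ℝ) : pauliDot a ⊗ₖ pauliDot b ≠ 1 := by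
  intro h
  have := congrArg trace h
  simp [trace_kronecker, trace_pauliDot] at this

lemma isHermitian_pauliDot_kronecker_pauliDot (a b : Fin 3 → ℝ) :
    (pauliDot a ⊗ₖ pauliDot b).IsHermitian :=
  (isHermitian_pauliDot a).kronecker (isHermitian_pauliDot b)

lemma pauliDot_kronecker_add_mul_self {u₁ u₂ v₁ v₂ : Fin 3 → ℝ}
    (hu₁ : u₁ ⬝ᵥ u₁ = 1) (hu₂ : u₂ ⬝ᵥ u₂ = 1) (hv₁ : v₁ ⬝ᵥ v₁ = 1) (hv₂ : v₂ ⬝ᵥ v₂ = 1)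
    (hv₁₂ : v₁ ⬝ᵥ v₂ = 0) :
    (pauliDot u₁ ⊗ₖ pauliDot v₁ + pauliDot u₂ ⊗ₖ pauliDot v₂) *
        (pauliDot u₁ ⊗ₖ pauliDot v₁ + pauliDot u₂ ⊗ₖ pauliDot v₂) =
      (2 : ℂ) • (1 - pauliDot (u₁ ⨯₃ u₂) ⊗ₖ pauliDot (v₁ ⨯₃ v₂)) := by
  have hsq (a : Fin 3 → ℝ) (ha : a ⬝ᵥ a = 1) : pauliDot a * pauliDot a = 1 := by
    simp [pauliDot_mul_self, ha]
  rw [kronecker_add_kronecker_mul_self (hsq u₁ hu₁) (hsq u₂ hu₂) (hsq v₁ hv₁) (hsq v₂ hv₂)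
    (pauliDot_anticomm_of_dotProduct_eq_zero hv₁₂), pauliDot_commutator,
    pauliDot_mul_pauliDot, hv₁₂, ofReal_zero, zero_smul, zero_add, smul_kronecker, kronecker_smul,
    smul_smul, mul_assoc, I_mul_I, smul_sub, smul_one_eq_diagonal]
  module

lemma pauliDot_cross_kronecker_pauliDot_cross_mul_self {u₁ u₂ v₁ v₂ : Fin 3 → ℝ}
    (hu₁ : u₁ ⬝ᵥ u₁ = 1) (hu₂ : u₂ ⬝ᵥ u₂ = 1) (hv₁ : v₁ ⬝ᵥ v₁ = 1) (hv₂ : v₂ ⬝ᵥ v₂ = 1)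
    (hv₁₂ : v₁ ⬝ᵥ v₂ = 0) :
    (pauliDot (u₁ ⨯₃ u₂) ⊗ₖ pauliDot (v₁ ⨯₃ v₂)) * (pauliDot (u₁ ⨯₃ u₂) ⊗ₖ pauliDot (v₁ ⨯₃ v₂)) =
      ((1 - (u₁ ⬝ᵥ u₂) ^ 2 : ℝ) : ℂ) • 1 := by
  rw [pauliDot_kronecker_pauliDot_mul_self, cross_dot_cross, cross_dot_cross, hu₁, hu₂, hv₁, hv₂,
    hv₁₂, dotProduct_comm u₂ u₁]
  ring_nf

/-- Corollary 1: for unit vectors `u₁, u₂` and orthonormal `v₁, v₂`, every two-qubit pure state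
satisfies `|⟨ψ, Oψ⟩| ≤ √2`, and the bound `√2` is attained by some state iff `u₁ ⬝ u₂ = 0`. -/
theorem steering_max_violation_sqrt_two (u₁ u₂ v₁ v₂ : Fin 3 → ℝ)
    (hu₁ : u₁ ⬝ᵥ u₁ = 1) (hu₂ : u₂ ⬝ᵥ u₂ = 1) (hv₁ : v₁ ⬝ᵥ v₁ = 1) (hv₂ : v₂ ⬝ᵥ v₂ = 1)
    (hv₁₂ : v₁ ⬝ᵥ v₂ = 0)
    (O : Matrix (Fin 2 × Fin 2) (Fin 2 × Fin 2) ℂ)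
    (hO : O = ((1 / Real.sqrt 2 : ℝ) : ℂ) •
      (pauliDot u₁ ⊗ₖ pauliDot v₁ + pauliDot u₂ ⊗ₖ pauliDot v₂)) :
    (∀ ψ : (Fin 2 × Fin 2) → ℂ, star ψ ⬝ᵥ ψ = 1 →
        ‖star ψ ⬝ᵥ O.mulVec ψ‖ ≤ Real.sqrt 2) ∧
      ((∃ ψ : (Fin 2 × Fin 2) → ℂ, star ψ ⬝ᵥ ψ = 1 ∧
          ‖star ψ ⬝ᵥ O.mulVec ψ‖ = Real.sqrt 2) ↔ u₁ ⬝ᵥ u₂ = 0) := by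
  set T := pauliDot (u₁ ⨯₃ u₂) ⊗ₖ pauliDot (v₁ ⨯₃ v₂)
  have hOH : O.IsHermitian := hO ▸
    ((isHermitian_pauliDot_kronecker_pauliDot u₁ v₁).add
      (isHermitian_pauliDot_kronecker_pauliDot u₂ v₂)).smul (conj_ofReal _)
  have hOO : O * O = 1 - T := by
    rw [hO, smul_mul_smul_comm, pauliDot_kronecker_add_mul_self hu₁ hu₂ hv₁ hv₂ hv₁₂, ← ofReal_mul,
      div_mul_div_comm, one_mul, Real.mul_self_sqrt zero_le_two, smul_smul]
    norm_num [T]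
  have hTT := pauliDot_cross_kronecker_pauliDot_cross_mul_self hu₁ hu₂ hv₁ hv₂ hv₁₂
  have hbound (ψ : (Fin 2 × Fin 2) → ℂ) (hψ : star ψ ⬝ᵥ ψ = 1) :
      ‖star ψ ⬝ᵥ O *ᵥ ψ‖ ^ 2 ≤ 1 + ‖star ψ ⬝ᵥ T *ᵥ ψ‖ ∧
        ‖star ψ ⬝ᵥ T *ᵥ ψ‖ ^ 2 ≤ 1 - (u₁ ⬝ᵥ u₂) ^ 2 :=
    ⟨norm_star_dotProduct_mulVec_sq_le_one_add hOH hOO hψ,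
      norm_star_dotProduct_mulVec_sq_le_of_mul_self_eq_smul
        (isHermitian_pauliDot_kronecker_pauliDot _ _) hTT hψ⟩
  refine ⟨fun ψ hψ => ?_, ⟨fun ⟨ψ, hψ, hmax⟩ => ?_, fun hc => ?_⟩⟩
  · obtain ⟨hOψ, hTψ⟩ := hbound ψ hψ
    apply Real.le_sqrt_of_sq_le
    nlinarith [norm_nonneg (star ψ ⬝ᵥ T *ᵥ ψ)]
  · obtain ⟨hOψ, hTψ⟩ := hbound ψ hψ
    rw [hmax, Real.sq_sqrt zero_le_two] at hOψ
    nlinarith [norm_nonneg (star ψ ⬝ᵥ T *ᵥ ψ)]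
  · exact exists_norm_star_dotProduct_mulVec_eq_sqrt_two hOO (by simpa [hc] using hTT)
      (pauliDot_kronecker_pauliDot_ne_one _ _)
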